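/- A finite simple graph G with at least two vertices is 1-{1,2}-factor-critical if and only if |S| < |N_G(S)| for every nonempty independent set S ⊆ V(G). -/

import Mathlib

/-- A `{1,2}`-factor of `G` : a spanning subgraph `H ≤ G` all of whose connected components
are regular of degree one or two, i.e. every vertex has degree 1 or 2 in `H` and any two
vertices in the same component of `H` have equal degree. -/
def SimpleGraph.Has12Factor {V : Type*} [Fintype V] (G : SimpleGraph V) : Prop :=
  ∃ H : SimpleGraph V, H ≤ G ∧
    (∀ v : V, (H.neighborSet v).ncard = 1 ∨ (H.neighborSet v).ncard = 2) ∧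
    (∀ u v : V, H.Reachable u v → (H.neighborSet u).ncard = (H.neighborSet v).ncard)

/-- `G` is `k`-`{1,2}`-factor-critical if deleting any set of exactly `k` vertices leaves
a graph having a `{1,2}`-factor. -/
def SimpleGraph.Is12FactorCritical {V : Type*} [Fintype V] [DecidableEq V]
    (G : SimpleGraph V) (k : ℕ) : Prop :=
  ∀ S : Finset V, S.card = k → (G.induce ((Sᶜ : Finset V) : Set V)).Has12Factor

/-!
A graph has a `{1,2}`-factor exactly when it satisfies Hall's condition `|S| ≤ |N(S)|`.
Given Hall's condition, the marriage theorem yields a permutation `σ` with `v ~ σ v` for every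
`v`, and the cycles of `σ` (2-cycles read as single edges) form a `{1,2}`-factor. Conversely,
adjacent vertices of a `{1,2}`-factor have equal degree, so charging each vertex `1 / deg` per
incident edge and counting the charges at the other end gives `|S| ≤ |N(S)|`.

It remains to see that Hall's condition for every `G - v` amounts to `|S| < |N(S)|` for
nonempty independent `S`. A vertex `v ∈ N(S)` lies outside `S`, and Hall's condition in `G - v`
gives `|S| ≤ |N(S)| - 1`. Conversely, split `A ⊆ V - v` into the vertices with a neighbour in
`A`, which lie in `N(A)`, and an independent rest `I`, whose neighbourhood is disjoint from them
and exceeds `I` even after removing `v`.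
-/

open Finset

namespace SimpleGraph

variable {V : Type*} {G : SimpleGraph V}

theorem Reachable.eq_of_forall_adj_eq {α : Type*} {f : V → α}
    (hf : ∀ u v, G.Adj u v → f u = f v) {u v : V} (h : G.Reachable u v) : f u = f v := by
  obtain ⟨p⟩ := h
  induction p with
  | nil => rfl
  | cons ha _ ih => exact (hf _ _ ha).trans ih

theorem neighborSet_fromRel_perm (σ : Equiv.Perm V) (hσ : ∀ v, σ v ≠ v) (v : V) :
    (fromRel fun u w => σ u = w).neighborSet v = {σ v, σ.symm v} := by
  ext w
  simp only [mem_neighborSet, fromRel_adj, Set.mem_insert_iff, Set.mem_singleton_iff,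
    Equiv.eq_symm_apply]
  have := hσ v
  have := hσ w
  grind

theorem has12Factor_of_forall_adj_perm [Fintype V] (σ : Equiv.Perm V)
    (hσ : ∀ v, G.Adj v (σ v)) : G.Has12Factor := by
  set H := fromRel fun u w => σ u = w
  have hN : ∀ v, H.neighborSet v = {σ v, σ.symm v} :=
    neighborSet_fromRel_perm σ fun v => (hσ v).ne'
  have hN_apply : ∀ u, H.neighborSet (σ u) = σ '' H.neighborSet u := by
    intro u
    rw [hN, hN, Set.image_pair, Equiv.symm_apply_apply, Equiv.apply_symm_apply, Set.pair_comm]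
  refine ⟨H, ?_, fun v => ?_, fun u v huv =>
    huv.eq_of_forall_adj_eq (f := fun x => (H.neighborSet x).ncard) ?_⟩
  · rintro u v ⟨-, rfl | rfl⟩
    exacts [hσ u, (hσ v).symm]
  · rw [hN]
    by_cases h : σ v = σ.symm v
    · simp [h]
    · simp [Set.ncard_pair h]
  · rintro u v ⟨-, rfl | rfl⟩ <;>
      simp only [hN_apply, Set.ncard_image_of_injective _ σ.injective]

theorem card_le_card_biUnion_neighborFinset [DecidableEq V] [G.LocallyFinite]
    (hpos : ∀ v, 0 < G.degree v) (hdeg : ∀ u v, G.Adj u v → G.degree u = G.degree v)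
    (S : Finset V) : #S ≤ #(S.biUnion (G.neighborFinset ·)) := by
  set N := S.biUnion (G.neighborFinset ·)
  have hone : ∀ v, ∑ _ ∈ G.neighborFinset v, (G.degree v : ℚ)⁻¹ = 1 := fun v => by
    rw [sum_const, card_neighborFinset_eq_degree, nsmul_eq_mul,
      mul_inv_cancel₀ (by exact_mod_cast (hpos v).ne')]
  suffices (#S : ℚ) ≤ #N by exact_mod_cast this
  calc (#S : ℚ)
      = ∑ s ∈ S, ∑ t ∈ G.neighborFinset s, (G.degree t : ℚ)⁻¹ := by
        rw [card_eq_sum_ones, Nat.cast_sum]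
        refine sum_congr rfl fun s _ => ?_
        rw [Nat.cast_one, ← hone s]
        exact sum_congr rfl fun t ht => by rw [hdeg s t ((mem_neighborFinset ..).1 ht)]
    _ = ∑ t ∈ N, ∑ s ∈ (G.neighborFinset t).filter (· ∈ S), (G.degree t : ℚ)⁻¹ :=
        sum_comm' fun s t => by
          simp only [N, mem_filter, mem_biUnion, mem_neighborFinset]
          exact ⟨fun h => ⟨⟨h.2.symm, h.1⟩, s, h⟩, fun h => ⟨h.1.2, h.1.1.symm⟩⟩
    _ ≤ ∑ t ∈ N, ∑ s ∈ G.neighborFinset t, (G.degree t : ℚ)⁻¹ :=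
        sum_le_sum fun t _ => sum_le_sum_of_subset_of_nonneg (filter_subset _ _)
          fun _ _ _ => by positivity
    _ = #N := by simp only [hone, sum_const, nsmul_one]

theorem Has12Factor.ncard_le_ncard_iUnion_neighborSet [Fintype V] (h : G.Has12Factor)
    (S : Set V) : S.ncard ≤ (⋃ x ∈ S, G.neighborSet x).ncard := by
  classical
  obtain ⟨H, hle, hdeg, hreg⟩ := h
  have hncard : ∀ v, (H.neighborSet v).ncard = H.degree v := fun v => by
    rw [← card_neighborSet_eq_degree, Set.ncard_eq_toFinset_card', Set.toFinset_card]
  calc S.ncard = #S.toFinset := Set.ncard_eq_toFinset_card' S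
    _ ≤ #(S.toFinset.biUnion (H.neighborFinset ·)) :=
        card_le_card_biUnion_neighborFinset (fun v => by have := hdeg v; grind)
          (fun u v huv => by rw [← hncard, ← hncard, hreg u v huv.reachable]) _
    _ = (⋃ x ∈ S, H.neighborSet x).ncard := by
        rw [← Set.ncard_coe_finset]; simp [neighborFinset_def]
    _ ≤ (⋃ x ∈ S, G.neighborSet x).ncard :=
        Set.ncard_le_ncard (Set.biUnion_mono subset_rfl fun x _ => neighborSet_mono hle x)

theorem has12Factor_of_forall_ncard_le [Fintype V]
    (h : ∀ S : Set V, S.ncard ≤ (⋃ x ∈ S, G.neighborSet x).ncard) : G.Has12Factor := by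
  classical
  obtain ⟨f, hf, hadj⟩ :=
    (all_card_le_biUnion_card_iff_exists_injective (G.neighborFinset ·)).mp fun S => by
      simpa [← Set.ncard_coe_finset, neighborFinset_def] using h S
  exact has12Factor_of_forall_adj_perm (Equiv.ofBijective f hf.bijective_of_finite)
    fun v => (mem_neighborFinset ..).1 (hadj v)

theorem has12Factor_iff_forall_ncard_le [Fintype V] :
    G.Has12Factor ↔ ∀ S : Set V, S.ncard ≤ (⋃ x ∈ S, G.neighborSet x).ncard :=
  ⟨Has12Factor.ncard_le_ncard_iUnion_neighborSet, has12Factor_of_forall_ncard_le⟩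

theorem image_val_iUnion_neighborSet_induce (W : Set V) (A : Set W) :
    Subtype.val '' (⋃ x ∈ A, (G.induce W).neighborSet x) =
      (⋃ x ∈ Subtype.val '' A, G.neighborSet x) ∩ W := by
  ext u
  simp only [Set.mem_image, Set.mem_iUnion, mem_neighborSet, comap_adj,
    Function.Embedding.subtype_apply, Set.mem_inter_iff, exists_prop, Subtype.exists,
    exists_and_right, exists_eq_right]
  constructor
  · rintro ⟨x, hx, ⟨i, hi, hadj⟩, rfl⟩
    exact ⟨⟨i, hi, hadj⟩, hx⟩
  · rintro ⟨⟨i, hi, hadj⟩, hu⟩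
    exact ⟨u, hu, ⟨i, hi, hadj⟩, rfl⟩

theorem has12Factor_induce_iff (W : Set V) [Fintype W] :
    (G.induce W).Has12Factor ↔
      ∀ A ⊆ W, A.ncard ≤ ((⋃ x ∈ A, G.neighborSet x) ∩ W).ncard := by
  have hcard : ∀ A : Set W, A.ncard = (Subtype.val '' A).ncard := fun A =>
    (Set.ncard_image_of_injective A Subtype.val_injective).symm
  rw [has12Factor_iff_forall_ncard_le]
  constructor
  · intro h A hA
    have hA' : Subtype.val '' (Subtype.val ⁻¹' A : Set W) = A := by
      rw [Subtype.image_preimage_coe, Set.inter_eq_right.2 hA]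
    simpa only [hcard, image_val_iUnion_neighborSet_induce, hA'] using h (Subtype.val ⁻¹' A)
  · intro h A
    simpa only [hcard, image_val_iUnion_neighborSet_induce] using
      h _ (Subtype.coe_image_subset W A)

theorem ncard_lt_ncard_iUnion_neighborSet_of_forall_ncard_le_sdiff [Finite V] [Nontrivial V]
    (h : ∀ v, ∀ A : Set V, v ∉ A → A.ncard ≤ ((⋃ x ∈ A, G.neighborSet x) \ {v}).ncard)
    {S : Set V} (hS : S.Nonempty) (hind : ∀ u ∈ S, ∀ v ∈ S, ¬ G.Adj u v) :
    S.ncard < (⋃ x ∈ S, G.neighborSet x).ncard := by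
  by_cases hN : (⋃ x ∈ S, G.neighborSet x).Nonempty
  · obtain ⟨v, hv⟩ := hN
    have hvS : v ∉ S := fun hvS => by
      obtain ⟨x, hx, hxv⟩ := Set.mem_iUnion₂.1 hv
      exact hind x hx v hvS hxv
    have hpos := (Set.ncard_pos (Set.toFinite _)).2 ⟨v, hv⟩
    have := h v S hvS
    rw [Set.ncard_sdiff_singleton_of_mem hv] at this
    omega
  · obtain ⟨s, hs⟩ := hS
    obtain ⟨v, hv⟩ := exists_ne s
    have hempty : G.neighborSet s \ {v} = ∅ := Set.subset_empty_iff.1 <|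
      Set.sdiff_subset.trans <| (Set.subset_biUnion_of_mem hs).trans
        (Set.not_nonempty_iff_eq_empty.1 hN).subset
    have := h v {s} (by simpa using hv)
    simp [hempty] at this

theorem ncard_le_ncard_iUnion_neighborSet_sdiff_of_forall_ncard_lt [Finite V]
    (h : ∀ S : Set V, S.Nonempty → (∀ u ∈ S, ∀ v ∈ S, ¬ G.Adj u v) →
      S.ncard < (⋃ x ∈ S, G.neighborSet x).ncard)
    {v : V} {A : Set V} (hvA : v ∉ A) :
    A.ncard ≤ ((⋃ x ∈ A, G.neighborSet x) \ {v}).ncard := by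
  set I := {a ∈ A | ∀ b ∈ A, ¬ G.Adj a b}
  have hIA : I ⊆ A := Set.sep_subset _ _
  have hI : I.ncard ≤ ((⋃ x ∈ I, G.neighborSet x) \ {v}).ncard := by
    rcases I.eq_empty_or_nonempty with hI | hI
    · simp [hI]
    · have := h I hI fun a ha b hb => ha.2 b hb.1
      have := Set.ncard_le_ncard_sdiff_add_ncard (⋃ x ∈ I, G.neighborSet x) {v}
      simp only [Set.ncard_singleton] at this
      omega
  have hdisj : Disjoint (A \ I) ((⋃ x ∈ I, G.neighborSet x) \ {v}) := by
    refine Set.disjoint_left.2 fun x hx hxN => ?_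
    obtain ⟨i, hi, hix⟩ := Set.mem_iUnion₂.1 hxN.1
    exact hi.2 x hx.1 hix
  have hsub : (A \ I) ∪ ((⋃ x ∈ I, G.neighborSet x) \ {v}) ⊆
      (⋃ x ∈ A, G.neighborSet x) \ {v} := by
    refine Set.union_subset (fun x hx => ⟨?_, ?_⟩) (Set.sdiff_subset_sdiff_left
      (Set.biUnion_subset_biUnion_left hIA))
    · obtain ⟨b, hb, hxb⟩ : ∃ b ∈ A, G.Adj x b := by
        by_contra! hx'
        exact hx.2 ⟨hx.1, hx'⟩
      exact Set.mem_iUnion₂.2 ⟨b, hb, hxb.symm⟩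
    · rintro rfl
      exact hvA hx.1
  calc A.ncard = (A \ I).ncard + I.ncard := (Set.ncard_sdiff_add_ncard_of_subset hIA).symm
    _ ≤ (A \ I).ncard + ((⋃ x ∈ I, G.neighborSet x) \ {v}).ncard := by omega
    _ = ((A \ I) ∪ ((⋃ x ∈ I, G.neighborSet x) \ {v})).ncard :=
        (Set.ncard_union_eq hdisj).symm
    _ ≤ ((⋃ x ∈ A, G.neighborSet x) \ {v}).ncard := Set.ncard_le_ncard hsub

theorem is12FactorCritical_one_iff [Fintype V] [DecidableEq V] :
    G.Is12FactorCritical 1 ↔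
      ∀ v, ∀ A : Set V, v ∉ A → A.ncard ≤ ((⋃ x ∈ A, G.neighborSet x) \ {v}).ncard := by
  simp only [Is12FactorCritical, card_eq_one]
  refine ⟨fun h v => ?_, fun h _ ⟨v, hv⟩ => ?_⟩
  · simpa [← Set.sdiff_eq] using (has12Factor_induce_iff _).1 (h {v} ⟨v, rfl⟩)
  · subst hv
    exact (has12Factor_induce_iff _).2 (by simpa [← Set.sdiff_eq] using h v)

theorem setOf_exists_adj_eq_iUnion_neighborSet (S : Set V) :
    {u | ∃ v ∈ S, G.Adj v u} = ⋃ x ∈ S, G.neighborSet x := by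
  ext; simp

end SimpleGraph

/-- `G` with at least two vertices is `1`-`{1,2}`-factor-critical iff `|S| < |N_G(S)|` for
every nonempty independent set `S ⊆ V(G)`. -/
theorem stmt_4 {V : Type*} [Fintype V] [DecidableEq V] (G : SimpleGraph V)
    (hcard : 2 ≤ Fintype.card V) :
    G.Is12FactorCritical 1 ↔
      ∀ S : Set V, S.Nonempty → (∀ u ∈ S, ∀ v ∈ S, ¬ G.Adj u v) →
        S.ncard < {u : V | ∃ v ∈ S, G.Adj v u}.ncard := by
  have : Nontrivial V := Fintype.one_lt_card_iff_nontrivial.mp hcard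
  simp only [SimpleGraph.is12FactorCritical_one_iff,
    SimpleGraph.setOf_exists_adj_eq_iUnion_neighborSet]
  exact ⟨fun h _ => SimpleGraph.ncard_lt_ncard_iUnion_neighborSet_of_forall_ncard_le_sdiff h,
    fun h _ _ => SimpleGraph.ncard_le_ncard_iUnion_neighborSet_sdiff_of_forall_ncard_lt h⟩
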